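/- arXiv:1912.13224 — 6 statements merged into one kernel-verified Lean document; each statement's English description precedes it below -/
import Mathlib

section
/- If C₁ and C₂ are convex subsets of a real vector space and x ∈ C₁ ∩ C₂, then the minimal face of x in C₁ ∩ C₂ equals the intersection of the minimal face of x in C₁ with the minimal face of x in C₂. -/
open Set

def IsFaceOf {W : Type*} [AddCommGroup W] [Module ℝ W] (C F : Set W) : Prop :=
  F ⊆ C ∧ Convex ℝ F ∧ ∀ y z : W, y ≠ z → openSegment ℝ y z ⊆ C →
    (openSegment ℝ y z ∩ F).Nonempty → openSegment ℝ y z ⊆ F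

def minimalFace {W : Type*} [AddCommGroup W] [Module ℝ W] (C : Set W) (x : W) : Set W :=
  ⋂₀ {F | IsFaceOf C F ∧ x ∈ F}

/-! For convex `C`, a point `y` lies in the minimal face of `x` exactly when the segment `[x, y]`
can be prolonged a little beyond both of its endpoints inside `C`. This relation is symmetric
and transitive, so the points related to `x` form a face, and every face containing `x` contains
them. Prolongations inside `C₁` and inside `C₂` can be shortened to a common one, which then
lies in `C₁ ∩ C₂`. -/

open Filter Topology

section
variable {V : Type*} [AddCommGroup V] [Module ℝ V] {C : Set V} {x y w p : V}

def SegmentExtends (C : Set V) (x y : V) : Prop :=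
  ∃ ε > (0 : ℝ), x + ε • (x - y) ∈ C ∧ y + ε • (y - x) ∈ C

theorem SegmentExtends.symm (h : SegmentExtends C x y) : SegmentExtends C y x :=
  let ⟨ε, hε, hx, hy⟩ := h
  ⟨ε, hε, hy, hx⟩

theorem left_mem_openSegment_extend {ε : ℝ} (hε : 0 < ε) :
    x ∈ openSegment ℝ (x + ε • (x - y)) (y + ε • (y - x)) := by
  refine ⟨(1 + ε) / (1 + 2 * ε), ε / (1 + 2 * ε), by positivity, by positivity,
    by field_simp; ring, ?_⟩
  match_scalars <;> field_simp <;> ring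

theorem SegmentExtends.left_mem (hC : Convex ℝ C) (h : SegmentExtends C x y) : x ∈ C :=
  let ⟨_, hε, hx, hy⟩ := h
  hC.openSegment_subset hx hy (left_mem_openSegment_extend hε)

theorem SegmentExtends.right_mem (hC : Convex ℝ C) (h : SegmentExtends C x y) : y ∈ C :=
  h.symm.left_mem hC

theorem SegmentExtends.eventually (hC : Convex ℝ C) (h : SegmentExtends C x y) :
    ∀ᶠ δ in 𝓝[>] (0 : ℝ), x + δ • (x - y) ∈ C ∧ y + δ • (y - x) ∈ C := by
  have hxC := h.left_mem hC
  have hyC := h.right_mem hC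
  obtain ⟨ε, hε, hx, hy⟩ := h
  have shrink : ∀ {a b : V}, a ∈ C → a + ε • (a - b) ∈ C → ∀ δ ∈ Ioo 0 ε,
      a + δ • (a - b) ∈ C := fun ha hab δ hδ => by
    have := hC.add_smul_mem ha hab (t := δ / ε)
      ⟨div_nonneg hδ.1.le hε.le, (div_le_one hε).2 hδ.2.le⟩
    rwa [smul_smul, div_mul_cancel₀ _ hε.ne'] at this
  filter_upwards [Ioo_mem_nhdsGT hε] with δ hδ
  exact ⟨shrink hxC hx δ hδ, shrink hyC hy δ hδ⟩

theorem segmentExtends_of_eventually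
    (h : ∀ᶠ δ in 𝓝[>] (0 : ℝ), x + δ • (x - y) ∈ C ∧ y + δ • (y - x) ∈ C) :
    SegmentExtends C x y :=
  let ⟨δ, hδ, hδpos⟩ := (h.and self_mem_nhdsWithin).exists
  ⟨δ, hδpos, hδ⟩

theorem segmentExtends_inter_iff {C₁ C₂ : Set V} (hC₁ : Convex ℝ C₁) (hC₂ : Convex ℝ C₂) :
    SegmentExtends (C₁ ∩ C₂) x y ↔ SegmentExtends C₁ x y ∧ SegmentExtends C₂ x y := by
  refine ⟨fun ⟨ε, hε, hx, hy⟩ => ⟨⟨ε, hε, hx.1, hy.1⟩, ⟨ε, hε, hx.2, hy.2⟩⟩, fun ⟨h₁, h₂⟩ => ?_⟩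
  apply segmentExtends_of_eventually
  filter_upwards [h₁.eventually hC₁, h₂.eventually hC₂] with δ hδ₁ hδ₂
  exact ⟨⟨hδ₁.1, hδ₂.1⟩, ⟨hδ₁.2, hδ₂.2⟩⟩

-- The chord from `x + ε₁ • (x - w)` to `w + ε₂ • (w - p)` crosses the line through `x` and `p`.
theorem Convex.add_smul_sub_mem_of_add_smul_sub_mem (hC : Convex ℝ C) {ε₁ ε₂ : ℝ}
    (hε₁ : 0 ≤ ε₁) (hε₂ : 0 ≤ ε₂) (hx : x + ε₁ • (x - w) ∈ C) (hw : w + ε₂ • (w - p) ∈ C) :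
    x + (ε₁ * ε₂ / (1 + ε₁ + ε₂)) • (x - p) ∈ C := by
  have key := hC hx hw (a := (1 + ε₂) / (1 + ε₁ + ε₂)) (b := ε₁ / (1 + ε₁ + ε₂))
    (by positivity) (by positivity) (by field_simp; ring)
  convert key using 1
  match_scalars <;> field_simp <;> ring

theorem SegmentExtends.trans (hC : Convex ℝ C) (hxw : SegmentExtends C x w)
    (hwp : SegmentExtends C w p) : SegmentExtends C x p := by
  obtain ⟨ε₁, hε₁, hx, hw₁⟩ := hxw
  obtain ⟨ε₂, hε₂, hw₂, hp⟩ := hwp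
  refine ⟨ε₁ * ε₂ / (1 + ε₁ + ε₂), by positivity,
    hC.add_smul_sub_mem_of_add_smul_sub_mem hε₁.le hε₂.le hx hw₂, ?_⟩
  convert hC.add_smul_sub_mem_of_add_smul_sub_mem hε₂.le hε₁.le hp hw₁ using 3
  ring

theorem segmentExtends_of_mem_openSegment {u v : V} (hC : openSegment ℝ u v ⊆ C)
    (hw : w ∈ openSegment ℝ u v) (hp : p ∈ openSegment ℝ u v) : SegmentExtends C w p := by
  rw [openSegment_eq_image'] at hC hw hp
  obtain ⟨s, hs, rfl⟩ := hw
  obtain ⟨r, hr, rfl⟩ := hp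
  have stays : ∀ a ∈ Ioo (0 : ℝ) 1, ∀ b : ℝ, ∀ᶠ δ in 𝓝[>] (0 : ℝ),
      u + a • (v - u) + δ • (u + a • (v - u) - (u + b • (v - u))) ∈ C := fun a ha b => by
    have hcont : Tendsto (fun δ : ℝ => a + δ * (a - b)) (𝓝 0) (𝓝 a) := by
      have : Continuous fun δ : ℝ => a + δ * (a - b) := by fun_prop
      simpa using this.tendsto 0
    filter_upwards [nhdsWithin_le_nhds (hcont.eventually (Ioo_mem_nhds ha.1 ha.2))]
      with δ hδ
    convert hC ⟨_, hδ, rfl⟩ using 1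
    module
  exact segmentExtends_of_eventually ((stays s hs r).and (stays r hr s))

theorem isFaceOf_setOf_segmentExtends (hC : Convex ℝ C) :
    IsFaceOf C {y | SegmentExtends C x y} := by
  refine ⟨fun y hy => hy.right_mem hC, ?_, fun u v _ huv ⟨w, hw, hxw⟩ p hp =>
    SegmentExtends.trans hC hxw (segmentExtends_of_mem_openSegment huv hw hp)⟩
  intro y₁ h₁ y₂ h₂ a b ha hb hab
  apply segmentExtends_of_eventually
  filter_upwards [h₁.eventually hC, h₂.eventually hC] with δ hδ₁ hδ₂
  obtain rfl : b = 1 - a := by linarith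
  constructor
  · convert hC hδ₁.1 hδ₂.1 ha hb hab using 1
    module
  · convert hC hδ₁.2 hδ₂.2 ha hb hab using 1
    module

theorem SegmentExtends.mem_of_isFaceOf (hC : Convex ℝ C) {F : Set V} (hF : IsFaceOf C F)
    (hxF : x ∈ F) (h : SegmentExtends C x y) : y ∈ F := by
  obtain rfl | hxy := eq_or_ne x y
  · exact hxF
  obtain ⟨ε, hε, hx, hy⟩ := h
  have hne : x + ε • (x - y) ≠ y + ε • (y - x) := by
    intro heq
    apply hxy
    have : (1 + 2 * ε) • (x - y) = 0 := by rw [← sub_eq_zero.2 heq]; module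
    exact sub_eq_zero.1 ((smul_eq_zero.1 this).resolve_left (by positivity))
  have hyseg : y ∈ openSegment ℝ (x + ε • (x - y)) (y + ε • (y - x)) := by
    rw [openSegment_symm]; exact left_mem_openSegment_extend hε
  exact hF.2.2 _ _ hne (hC.openSegment_subset hx hy)
    ⟨x, left_mem_openSegment_extend hε, hxF⟩ hyseg

theorem minimalFace_eq_setOf_segmentExtends (hC : Convex ℝ C) (hx : x ∈ C) :
    minimalFace C x = {y | SegmentExtends C x y} := by
  refine subset_antisymm (sInter_subset_of_mem ⟨isFaceOf_setOf_segmentExtends hC, ?_⟩)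
    fun y hy => mem_sInter.2 fun F ⟨hF, hxF⟩ => hy.mem_of_isFaceOf hC hF hxF
  exact ⟨1, one_pos, by simpa using hx, by simpa using hx⟩

end

theorem minimalFace_inter
    {V : Type*} [AddCommGroup V] [Module ℝ V]
    {C₁ C₂ : Set V} (hC₁ : Convex ℝ C₁) (hC₂ : Convex ℝ C₂)
    {x : V} (hx₁ : x ∈ C₁) (hx₂ : x ∈ C₂) :
    minimalFace (C₁ ∩ C₂) x = minimalFace C₁ x ∩ minimalFace C₂ x := by
  rw [minimalFace_eq_setOf_segmentExtends (hC₁.inter hC₂) ⟨hx₁, hx₂⟩,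
    minimalFace_eq_setOf_segmentExtends hC₁ hx₁, minimalFace_eq_setOf_segmentExtends hC₂ hx₂]
  ext y
  exact segmentExtends_inter_iff hC₁ hC₂
end

section
/- If a nonempty convex set C is linearly closed and contains a line with direction vector v (i.e., x₀ + ℝ·v ⊆ C for some x₀), then C is invariant in the direction v, i.e., C + ℝ·v ⊆ C. -/
open Set

def linealitySet {W : Type*} [AddCommGroup W] [Module ℝ W] (C : Set W) : Set W :=
  {v | ∀ x ∈ C, ∀ t : ℝ, x + t • v ∈ C}

def LinearlyClosed {W : Type*} [AddCommGroup W] [Module ℝ W] (C : Set W) : Prop :=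
  ∀ a v : W, IsClosed {t : ℝ | a + t • v ∈ C}

/-!
Fix `x ∈ C` and `t`. For `s ∈ (0, 1]` the convex combination of `x` and the point
`x₀ + (t / s) • v` of the line is `x + t • v + s • (x₀ - x)`, so these points lie in `C`;
letting `s → 0` along the line through `x + t • v` in direction `x₀ - x`, linear closedness
puts `x + t • v` itself in `C`.
-/

section

variable {W : Type*} [AddCommGroup W] [Module ℝ W] {C : Set W}

theorem LinearlyClosed.mem_of_forall_Ioc (hcl : LinearlyClosed C) {a w : W}
    (h : ∀ s ∈ Ioc (0 : ℝ) 1, a + s • w ∈ C) : a ∈ C := by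
  have hclosure : closure (Ioc (0 : ℝ) 1) ⊆ {s : ℝ | a + s • w ∈ C} :=
    (hcl a w).closure_subset_iff.mpr h
  rw [closure_Ioc zero_ne_one] at hclosure
  simpa using hclosure (left_mem_Icc.mpr zero_le_one)

theorem Convex.add_smul_add_smul_sub_mem (hC : Convex ℝ C) {v x₀ x : W}
    (hline : ∀ t : ℝ, x₀ + t • v ∈ C) (hx : x ∈ C) (t : ℝ) {s : ℝ} (hs : s ∈ Ioc (0 : ℝ) 1) :
    x + t • v + s • (x₀ - x) ∈ C := by
  have hcomb : (1 - s) • x + s • (x₀ + (t / s) • v) = x + t • v + s • (x₀ - x) := by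
    rw [smul_add, smul_smul, mul_div_cancel₀ _ hs.1.ne', sub_smul, smul_sub, one_smul]
    abel
  rw [← hcomb]
  exact hC hx (hline (t / s)) (sub_nonneg.mpr hs.2) hs.1.le (sub_add_cancel 1 s)

theorem LinearlyClosed.mem_linealitySet (hcl : LinearlyClosed C) (hC : Convex ℝ C) {v x₀ : W}
    (hline : ∀ t : ℝ, x₀ + t • v ∈ C) :
    v ∈ linealitySet C := fun _ hx t ↦
  hcl.mem_of_forall_Ioc fun _ hs ↦ hC.add_smul_add_smul_sub_mem hline hx t hs

end

theorem linearlyClosed_line_invariant_general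
    {V : Type*} [AddCommGroup V] [Module ℝ V]
    {C : Set V} (hC : Convex ℝ C) (hcl : LinearlyClosed C)
    {v : V} {x₀ : V} (hline : ∀ t : ℝ, x₀ + t • v ∈ C) :
    ∀ x ∈ C, ∀ t : ℝ, x + t • v ∈ C :=
  hcl.mem_linealitySet hC hline

theorem linearlyClosed_line_invariant
    {V : Type*} [AddCommGroup V] [Module ℝ V]
    {C : Set V} (hC : Convex ℝ C) (hne : C.Nonempty) (hcl : LinearlyClosed C)
    {v : V} (hv : v ≠ 0) {x₀ : V} (hline : ∀ t : ℝ, x₀ + t • v ∈ C) :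
    ∀ x ∈ C, ∀ t : ℝ, x + t • v ∈ C :=
  linearlyClosed_line_invariant_general hC hcl hline
end

section
/- If C₁ and C₂ are nonempty convex sets with nonempty intersection, then lin(C₁) ∩ lin(C₂) ⊆ lin(C₁ ∩ C₂); if moreover C₁ and C₂ are both linearly closed, then equality holds. -/
open Set

/-- `x + t • v` is the limit, as `l → 0⁺`, of the convex combinations
`l • (a + (t / l) • v) + (1 - l) • x` of points of `C`. -/
theorem LinearlyClosed.mem_linealitySet_of_forall_add_smul_mem {V : Type*} [AddCommGroup V]
    [Module ℝ V] {C : Set V} (hcl : LinearlyClosed C) (hC : Convex ℝ C) {a v : V}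
    (ha : ∀ s : ℝ, a + s • v ∈ C) : v ∈ linealitySet C := by
  intro x hx t
  have hsub : Ioc (0 : ℝ) 1 ⊆ {l : ℝ | (x + t • v) + l • (a - x) ∈ C} := by
    rintro l ⟨hl₀, hl₁⟩
    have hcomb : l • (a + (t / l) • v) + (1 - l) • x = (x + t • v) + l • (a - x) := by
      rw [smul_add, smul_smul, mul_div_cancel₀ _ hl₀.ne']
      module
    rw [mem_ofPred_eq, ← hcomb]
    exact hC (ha (t / l)) hx hl₀.le (by linarith) (by ring)
  have h₀ : (0 : ℝ) ∈ closure (Ioc (0 : ℝ) 1) := by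
    rw [closure_Ioc zero_ne_one]
    exact ⟨le_rfl, zero_le_one⟩
  simpa using (hcl _ _).closure_subset_iff.mpr hsub h₀

theorem inter_linealitySet_subset {V : Type*} [AddCommGroup V] [Module ℝ V] (C₁ C₂ : Set V) :
    linealitySet C₁ ∩ linealitySet C₂ ⊆ linealitySet (C₁ ∩ C₂) :=
  fun _ ⟨h₁, h₂⟩ x ⟨hx₁, hx₂⟩ t => ⟨h₁ x hx₁ t, h₂ x hx₂ t⟩

theorem LinearlyClosed.linealitySet_subset_of_subset {V : Type*} [AddCommGroup V] [Module ℝ V]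
    {C D : Set V} (hcl : LinearlyClosed C) (hC : Convex ℝ C) (hDC : D ⊆ C) (hD : D.Nonempty) :
    linealitySet D ⊆ linealitySet C := by
  obtain ⟨a, ha⟩ := hD
  exact fun v hv => hcl.mem_linealitySet_of_forall_add_smul_mem hC fun s => hDC (hv a ha s)

theorem linealitySet_inter_general
    {V : Type*} [AddCommGroup V] [Module ℝ V]
    {C₁ C₂ : Set V} (hC₁ : Convex ℝ C₁) (hC₂ : Convex ℝ C₂)
    (hne : (C₁ ∩ C₂).Nonempty) :
    linealitySet C₁ ∩ linealitySet C₂ ⊆ linealitySet (C₁ ∩ C₂) ∧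
    (LinearlyClosed C₁ → LinearlyClosed C₂ →
      linealitySet C₁ ∩ linealitySet C₂ = linealitySet (C₁ ∩ C₂)) := by
  refine ⟨inter_linealitySet_subset C₁ C₂, fun hcl₁ hcl₂ => ?_⟩
  refine (inter_linealitySet_subset C₁ C₂).antisymm (subset_inter ?_ ?_)
  · exact hcl₁.linealitySet_subset_of_subset hC₁ inter_subset_left hne
  · exact hcl₂.linealitySet_subset_of_subset hC₂ inter_subset_right hne

theorem linealitySet_inter
    {V : Type*} [AddCommGroup V] [Module ℝ V]
    {C₁ C₂ : Set V} (hC₁ : Convex ℝ C₁) (hC₂ : Convex ℝ C₂)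
    (hne₁ : C₁.Nonempty) (hne₂ : C₂.Nonempty) (hne : (C₁ ∩ C₂).Nonempty) :
    linealitySet C₁ ∩ linealitySet C₂ ⊆ linealitySet (C₁ ∩ C₂) ∧
    (LinearlyClosed C₁ → LinearlyClosed C₂ →
      linealitySet C₁ ∩ linealitySet C₂ = linealitySet (C₁ ∩ C₂)) :=
  linealitySet_inter_general hC₁ hC₂ hne
end

section
/- Let C be a convex set that is linearly closed, linearly bounded, and such that every point of C is either in the relative algebraic interior of C or an extreme point of C. Then every point of C is a convex combination of at most two extreme points of C. -/
open Set

def LinearlyBounded {W : Type*} [AddCommGroup W] [Module ℝ W] (C : Set W) : Prop :=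
  ∀ a v : W, v ≠ 0 → Bornology.IsBounded {t : ℝ | a + t • v ∈ C}

def relAlgInterior {V : Type*} [AddCommGroup V] [Module ℝ V] (C : Set V) : Set V :=
  {u ∈ C | ∀ v ∈ C, v ≠ u → ∃ z ∈ C, u ∈ openSegment ℝ v z}

/-!
The line through two distinct points of `C` meets `C` in a compact interval of parameters,
since `C` is linearly closed and linearly bounded. An endpoint of that chord is not in the
relative algebraic interior, because it cannot be pushed further along the line, so it is an
extreme point; and every point of the chord lies between its two endpoints.
-/

section

variable {V : Type*} [AddCommGroup V] [Module ℝ V] {C : Set V}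

lemma exists_pos_add_smul_sub_mem_of_mem_relAlgInterior {u w : V} (hu : u ∈ relAlgInterior C)
    (hw : w ∈ C) (hwu : w ≠ u) : ∃ s : ℝ, 0 < s ∧ u + s • (u - w) ∈ C := by
  obtain ⟨z, hz, a, b, ha, hb, hab, rfl⟩ := hu.2 w hw hwu
  refine ⟨a / b, div_pos ha hb, ?_⟩
  convert hz using 1
  match_scalars <;> field_simp
  · linear_combination a * hab
  · linear_combination hab

lemma notMem_relAlgInterior_of_isGreatest {x v : V} {c β : ℝ} (hv : v ≠ 0)
    (hβ : IsGreatest {t | x + t • v ∈ C} β) (hc : x + c • v ∈ C) (hcβ : c < β) :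
    x + β • v ∉ relAlgInterior C := by
  intro hu
  have hne : x + c • v ≠ x + β • v := fun h =>
    hcβ.ne (smul_left_injective ℝ hv (add_left_cancel h))
  obtain ⟨s, hs, hmem⟩ := exists_pos_add_smul_sub_mem_of_mem_relAlgInterior hu hc hne
  have hbeyond : β + s * (β - c) ≤ β := hβ.2 <| by
    show x + (β + s * (β - c)) • v ∈ C
    convert hmem using 1
    match_scalars <;> ring
  nlinarith [mul_pos hs (sub_pos.2 hcβ)]

lemma notMem_relAlgInterior_of_isLeast {x v : V} {c α : ℝ} (hv : v ≠ 0)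
    (hα : IsLeast {t | x + t • v ∈ C} α) (hc : x + c • v ∈ C) (hαc : α < c) :
    x + α • v ∉ relAlgInterior C := by
  have hα' : IsGreatest {t | x + t • -v ∈ C} (-α) :=
    ⟨by simpa using hα.1, fun t ht => le_neg.2 (hα.2 (by simpa using ht))⟩
  simpa using notMem_relAlgInterior_of_isGreatest (neg_ne_zero.2 hv) hα' (c := -c)
    (by simpa using hc) (neg_lt_neg hαc)

lemma isCompact_setOf_add_smul_mem (hcl : LinearlyClosed C) (hbd : LinearlyBounded C) (x : V)
    {v : V} (hv : v ≠ 0) : IsCompact {t : ℝ | x + t • v ∈ C} :=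
  Metric.isCompact_of_isClosed_isBounded (hcl x v) (hbd x v hv)

lemma mem_segment_add_smul (x v : V) {α β : ℝ} (hα : α ≤ 0) (hβ : 0 ≤ β) :
    x ∈ segment ℝ (x + α • v) (x + β • v) := by
  have h0 : (0 : ℝ) ∈ segment ℝ α β := by rw [segment_eq_Icc (hα.trans hβ)]; exact ⟨hα, hβ⟩
  have := mem_image_of_mem (AffineMap.lineMap x (x + v)) h0
  simpa [image_segment, AffineMap.lineMap_apply_module', add_comm] using this

lemma exists_extremePoints_mem_segment (hcl : LinearlyClosed C) (hbd : LinearlyBounded C)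
    (hstruct : ∀ x ∈ C, x ∈ relAlgInterior C ∨ x ∈ C.extremePoints ℝ) {x : V} (hx : x ∈ C) :
    ∃ u ∈ C.extremePoints ℝ, ∃ w ∈ C.extremePoints ℝ, x ∈ segment ℝ u w := by
  by_cases hsingle : ∀ y ∈ C, y = x
  · have hxe : x ∈ C.extremePoints ℝ := ⟨hx, fun _ hy _ _ _ => hsingle _ hy⟩
    exact ⟨x, hxe, x, hxe, left_mem_segment ℝ x x⟩
  push Not at hsingle
  obtain ⟨y, hy, hyx⟩ := hsingle
  have hv : y - x ≠ 0 := sub_ne_zero.2 hyx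
  set S := {t : ℝ | x + t • (y - x) ∈ C}
  have hS : IsCompact S := isCompact_setOf_add_smul_mem hcl hbd x hv
  have h0 : (0 : ℝ) ∈ S := by simpa [S] using hx
  have h1 : (1 : ℝ) ∈ S := by simpa [S] using hy
  have hmin : IsLeast S (sInf S) := hS.isLeast_sInf ⟨0, h0⟩
  have hmax : IsGreatest S (sSup S) := hS.isGreatest_sSup ⟨0, h0⟩
  refine ⟨x + sInf S • (y - x), ?_, x + sSup S • (y - x), ?_,
    mem_segment_add_smul x (y - x) (hmin.2 h0) (hmax.2 h0)⟩
  · exact (hstruct _ hmin.1).resolve_left <|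
      notMem_relAlgInterior_of_isLeast hv hmin h1 ((hmin.2 h0).trans_lt one_pos)
  · exact (hstruct _ hmax.1).resolve_left <|
      notMem_relAlgInterior_of_isGreatest hv hmax h0 (one_pos.trans_le (hmax.2 h1))

end

theorem convexComb_two_extremePoints_general
    {V : Type*} [AddCommGroup V] [Module ℝ V]
    {C : Set V}
    (hcl : LinearlyClosed C) (hbd : LinearlyBounded C)
    (hstruct : ∀ x ∈ C, x ∈ relAlgInterior C ∨ x ∈ C.extremePoints ℝ) :
    ∀ x ∈ C, ∃ u ∈ C.extremePoints ℝ, ∃ v ∈ C.extremePoints ℝ, ∃ t ∈ Set.Icc (0:ℝ) 1,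
      x = t • u + (1 - t) • v := by
  intro x hx
  obtain ⟨u, hu, w, hw, hxuw⟩ := exists_extremePoints_mem_segment hcl hbd hstruct hx
  rw [segment_symm, segment_eq_image] at hxuw
  obtain ⟨t, ht, rfl⟩ := hxuw
  exact ⟨u, hu, w, hw, t, ht, add_comm _ _⟩

theorem convexComb_two_extremePoints
    {V : Type*} [AddCommGroup V] [Module ℝ V]
    {C : Set V} (hC : Convex ℝ C) (hne : C.Nonempty)
    (hcl : LinearlyClosed C) (hbd : LinearlyBounded C)
    (hstruct : ∀ x ∈ C, x ∈ relAlgInterior C ∨ x ∈ C.extremePoints ℝ) :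
    ∀ x ∈ C, ∃ u ∈ C.extremePoints ℝ, ∃ v ∈ C.extremePoints ℝ, ∃ t ∈ Set.Icc (0:ℝ) 1,
      x = t • u + (1 - t) • v :=
  convexComb_two_extremePoints_general hcl hbd hstruct
end

section
/- Among all real trigonometric polynomials η of degree at most f_c with sup norm at most 1 on the torus ℝ/ℤ, the maximum of η(h/2) - η(-h/2), for fixed 0 < h < 1/(2 f_c), is attained uniquely by η*(t) = sin(2π f_c t). -/
/-!
Put `g θ = (η (θ / 2π) - η (-θ / 2π)) / 2 = ∑ b_j sin (j θ)` and `n = f_c`. At the angles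
`θ_k = (2k+1)π/(2n)`, `k < n`, of the zeros of `T_n`, Lagrange interpolation of `U_{j-1}` gives,
for `0 < φ < π/(2n)`, a quadrature rule `sin (j φ) = ∑_k μ_k sin (j θ_k)` (`1 ≤ j ≤ n`) whose
weights alternate in sign, `(-1)^k μ_k > 0`. Hence `g φ = ∑ μ_k g θ_k ≤ ∑ |μ_k| = sin (n φ)`.
If equality holds, `g θ_k = (-1)^k = sin (n θ_k)` at all `n` nodes, and discrete orthogonality of
the sines at the nodes forces `b = e_n`. Then `η = ±1` at the nodes, so `η'` vanishes there, which
kills the cosine coefficients in the same way; the value at `θ_0` kills the constant term.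
-/

open Real Finset Polynomial

/-- `cos (chebyshevAngle n k)`, `k < n`, are the roots of the Chebyshev polynomial `T_n`. -/
noncomputable def chebyshevAngle (n k : ℕ) : ℝ := (2 * k + 1) * π / (2 * n)

section ChebyshevAngle

variable {n k : ℕ}

lemma chebyshevAngle_pos (hn : n ≠ 0) : 0 < chebyshevAngle n k := by
  unfold chebyshevAngle; positivity

lemma chebyshevAngle_lt_pi (hk : k < n) : chebyshevAngle n k < π := by
  have hk' : (k : ℝ) + 1 ≤ n := by exact_mod_cast hk
  unfold chebyshevAngle
  rw [div_lt_iff₀ (by linarith)]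
  nlinarith [pi_pos]

lemma strictMono_chebyshevAngle (hn : n ≠ 0) : StrictMono (chebyshevAngle n) := by
  intro i j hij
  unfold chebyshevAngle
  gcongr

lemma nat_mul_chebyshevAngle (hn : n ≠ 0) : n * chebyshevAngle n k = π / 2 + k * π := by
  unfold chebyshevAngle; field_simp; ring

lemma sin_nat_mul_chebyshevAngle (hn : n ≠ 0) : sin (n * chebyshevAngle n k) = (-1) ^ k := by
  rw [nat_mul_chebyshevAngle hn, sin_add_nat_mul_pi, sin_pi_div_two, mul_one]

lemma cos_nat_mul_chebyshevAngle (hn : n ≠ 0) : cos (n * chebyshevAngle n k) = 0 := by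
  rw [nat_mul_chebyshevAngle hn, cos_add_nat_mul_pi, cos_pi_div_two, mul_zero]

lemma sum_cos_int_mul_chebyshevAngle {m : ℤ} (hm : ¬ (2 * n : ℤ) ∣ m) :
    ∑ k ∈ range n, cos (m * chebyshevAngle n k) = 0 := by
  rcases eq_or_ne n 0 with rfl | hn
  · simp
  have := Chebyshev.sumZeroes_T_of_not_dvd (n := n) hm
  simp only [Chebyshev.sumZeroes, Chebyshev.T_real_cos, mul_eq_zero, div_eq_zero_iff,
    pi_ne_zero, Nat.cast_eq_zero, hn, or_self, false_or] at this
  simpa only [chebyshevAngle, div_mul_eq_mul_div] using this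

lemma sum_sin_mul_sin_chebyshevAngle {j j' : ℕ} (hj : j ∈ Icc 1 n) (hj' : j' ∈ Icc 1 n)
    (hne : j ≠ j') :
    ∑ k ∈ range n, sin (j * chebyshevAngle n k) * sin (j' * chebyshevAngle n k) = 0 := by
  rw [mem_Icc] at hj hj'
  have hnd : ∀ m : ℤ, m ≠ 0 → |m| < 2 * n → ¬ (2 * n : ℤ) ∣ m := fun m hm hlt hdvd =>
    hm (Int.eq_zero_of_abs_lt_dvd hdvd hlt)
  have hdiff := hnd (j - j') (by omega) (by rw [abs_lt]; omega)
  have hsum := hnd (j + j') (by omega) (by rw [abs_lt]; omega)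
  have e1 := sum_cos_int_mul_chebyshevAngle hdiff
  have e2 := sum_cos_int_mul_chebyshevAngle hsum
  push_cast at e1 e2
  simp only [sub_mul, add_mul, cos_sub, cos_add, sum_add_distrib, sum_sub_distrib] at e1 e2
  linear_combination (e1 - e2) / 2

lemma sin_nat_mul_chebyshevAngle_zero_pos {j : ℕ} (hj : j ∈ Icc 1 n) :
    0 < sin (j * chebyshevAngle n 0) := by
  rw [mem_Icc] at hj
  have hj1 : (1 : ℝ) ≤ j := by exact_mod_cast hj.1
  have hjn : (j : ℝ) ≤ n := by exact_mod_cast hj.2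
  apply sin_pos_of_pos_of_lt_pi
  · exact mul_pos (by positivity) (chebyshevAngle_pos (by omega))
  · calc (j : ℝ) * chebyshevAngle n 0 ≤ n * chebyshevAngle n 0 := by
          gcongr; exact (chebyshevAngle_pos (by omega)).le
      _ < π := by rw [nat_mul_chebyshevAngle (by omega)]; linarith [pi_pos]

end ChebyshevAngle

noncomputable def sinSum (n : ℕ) (b : ℕ → ℝ) (θ : ℝ) : ℝ := ∑ j ∈ Icc 1 n, b j * sin (j * θ)

noncomputable def cosSum (n : ℕ) (a : ℕ → ℝ) (θ : ℝ) : ℝ := ∑ j ∈ Icc 1 n, a j * cos (j * θ)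

noncomputable def trigPoly (n : ℕ) (a b : ℕ → ℝ) (θ : ℝ) : ℝ := a 0 + cosSum n a θ + sinSum n b θ

section TrigSums

variable {n : ℕ}

lemma sinSum_neg (b : ℕ → ℝ) (θ : ℝ) : sinSum n b (-θ) = -sinSum n b θ := by
  simp [sinSum, sum_neg_distrib]

lemma cosSum_neg (a : ℕ → ℝ) (θ : ℝ) : cosSum n a (-θ) = cosSum n a θ := by
  simp [cosSum]

lemma sinSum_sub (b b' : ℕ → ℝ) (θ : ℝ) :
    sinSum n (b - b') θ = sinSum n b θ - sinSum n b' θ := by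
  simp [sinSum, sub_mul, sum_sub_distrib]

lemma sinSum_congr {b b' : ℕ → ℝ} (h : ∀ j ∈ Icc 1 n, b j = b' j) : sinSum n b = sinSum n b' :=
  funext fun _ => sum_congr rfl fun j hj => by rw [h j hj]

lemma sinSum_single (hn : n ≠ 0) (θ : ℝ) : sinSum n (Pi.single n 1) θ = sin (n * θ) := by
  simp [sinSum, Pi.single_apply, Nat.one_le_iff_ne_zero.mpr hn]

lemma trigPoly_sub_trigPoly_neg (a b : ℕ → ℝ) (θ : ℝ) :
    trigPoly n a b θ - trigPoly n a b (-θ) = 2 * sinSum n b θ := by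
  rw [trigPoly, trigPoly, cosSum_neg, sinSum_neg]; ring

lemma abs_sinSum_le_one {a b : ℕ → ℝ} (h : ∀ θ, |trigPoly n a b θ| ≤ 1) (θ : ℝ) :
    |sinSum n b θ| ≤ 1 := by
  have := trigPoly_sub_trigPoly_neg (n := n) a b θ
  have h₁ := abs_le.mp (h θ)
  have h₂ := abs_le.mp (h (-θ))
  rw [abs_le]; constructor <;> linarith [h₁.1, h₁.2, h₂.1, h₂.2]

lemma hasDerivAt_cosSum (a : ℕ → ℝ) (θ : ℝ) :
    HasDerivAt (cosSum n a) (-sinSum n (fun j => j * a j) θ) θ := by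
  have : HasDerivAt (cosSum n a) (∑ j ∈ Icc 1 n, a j * (-sin (j * θ) * j)) θ := by
    have hj : ∀ j ∈ Icc 1 n, HasDerivAt (fun x => a j * cos (j * x)) (a j * (-sin (j * θ) * j)) θ :=
      fun j _ => by simpa [mul_comm] using ((hasDerivAt_id θ).const_mul (j : ℝ)).cos.const_mul (a j)
    exact HasDerivAt.fun_sum hj
  convert this using 1
  simp only [sinSum, ← sum_neg_distrib]
  exact sum_congr rfl fun j _ => by ring

lemma eq_zero_of_sinSum_chebyshevAngle_eq_zero {r : ℕ → ℝ}
    (hr : ∀ k < n, sinSum n r (chebyshevAngle n k) = 0) : ∀ j ∈ Icc 1 n, r j = 0 := by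
  intro i hi
  have hpos : 0 < ∑ k ∈ range n, sin (i * chebyshevAngle n k) ^ 2 :=
    sum_pos' (fun k _ => sq_nonneg _)
      ⟨0, mem_range.mpr (by grind), pow_pos (sin_nat_mul_chebyshevAngle_zero_pos hi) 2⟩
  have horth : ∑ k ∈ range n, sin (i * chebyshevAngle n k) * sinSum n r (chebyshevAngle n k)
      = r i * ∑ k ∈ range n, sin (i * chebyshevAngle n k) ^ 2 := by
    simp_rw [sinSum, mul_sum]
    rw [sum_comm, sum_eq_single_of_mem i hi]
    · exact sum_congr rfl fun k _ => by ring
    · intro j hj hji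
      simp_rw [mul_left_comm _ (r j), ← mul_sum, mul_comm (sin (i * _)),
        sum_sin_mul_sin_chebyshevAngle hj hi hji, mul_zero]
  have hzero : ∑ k ∈ range n, sin (i * chebyshevAngle n k) * sinSum n r (chebyshevAngle n k) = 0 :=
    sum_eq_zero fun k hk => by rw [hr k (mem_range.mp hk), mul_zero]
  rw [horth] at hzero
  exact (mul_eq_zero.mp hzero).resolve_right hpos.ne'

lemma eq_of_sinSum_chebyshevAngle_eq {b b' : ℕ → ℝ}
    (h : ∀ k < n, sinSum n b (chebyshevAngle n k) = sinSum n b' (chebyshevAngle n k)) :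
    ∀ j ∈ Icc 1 n, b j = b' j := fun j hj =>
  sub_eq_zero.mp <| eq_zero_of_sinSum_chebyshevAngle_eq_zero (r := b - b')
    (fun k hk => by rw [sinSum_sub, h k hk, sub_self]) j hj

end TrigSums

section Lagrange

variable {n k : ℕ} {v : ℕ → ℝ}

lemma neg_one_pow_mul_nodalWeight_pos (hv : StrictAntiOn v (range n)) (hk : k < n) :
    0 < (-1) ^ k * Lagrange.nodalWeight (range n) v k := by
  have hk' : k ∈ (range n : Set ℕ) := by simpa using hk
  have hsplit : (range n).erase k = range k ∪ Ioo k n := by grind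
  have hbelow : 0 < ∏ i ∈ range k, -(v k - v i)⁻¹ := prod_pos fun i hi => by
    have : v k < v i := hv (by simp; grind) hk' (mem_range.mp hi)
    simpa using this
  have habove : 0 < ∏ i ∈ Ioo k n, (v k - v i)⁻¹ := prod_pos fun i hi => by
    have : v i < v k := hv hk' (by simp; grind) (mem_Ioo.mp hi).1
    simpa using this
  rw [Lagrange.nodalWeight, hsplit, prod_union (by grind [disjoint_left]), ← mul_assoc]
  rw [prod_neg, card_range] at hbelow
  exact mul_pos hbelow habove

lemma neg_one_pow_mul_eval_basis_pos (hv : StrictAntiOn v (range n)) {x : ℝ}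
    (hx : ∀ i < n, v i < x) (hk : k < n) :
    0 < (-1) ^ k * (Lagrange.basis (range n) v k).eval x := by
  rw [Lagrange.eval_basis_not_at_node (mem_range.mpr hk) (hx k hk).ne', Lagrange.eval_nodal]
  have hnodal : 0 < ∏ i ∈ range n, (x - v i) :=
    prod_pos fun i hi => sub_pos.mpr (hx i (mem_range.mp hi))
  have hweight := neg_one_pow_mul_nodalWeight_pos hv hk
  have hinv := inv_pos.mpr (sub_pos.mpr (hx k hk))
  calc 0 < (∏ i ∈ range n, (x - v i)) * ((-1) ^ k * Lagrange.nodalWeight (range n) v k) *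
        (x - v k)⁻¹ := mul_pos (mul_pos hnodal hweight) hinv
    _ = _ := by ring

end Lagrange

-- `sin (j φ) = sin φ * U_{j-1} (cos φ)` and `U_{j-1}` is its own interpolant at `n > j - 1` nodes.
lemma sin_nat_mul_eq_sum_eval_basis {n j : ℕ} {θ : ℕ → ℝ}
    (hinj : Set.InjOn (fun k => cos (θ k)) (range n)) (hsin : ∀ k < n, sin (θ k) ≠ 0)
    (hj : j ∈ Icc 1 n) (φ : ℝ) :
    sin (j * φ) = ∑ k ∈ range n, sin φ / sin (θ k) *
      (Lagrange.basis (range n) (fun k => cos (θ k)) k).eval (cos φ) * sin (j * θ k) := by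
  rw [mem_Icc] at hj
  set p := Chebyshev.U ℝ ((j - 1 : ℕ) : ℤ)
  have hp : ∀ x, p.eval (cos x) * sin x = sin (j * x) := fun x => by
    rw [Chebyshev.U_real_cos]; push_cast [Nat.cast_sub hj.1]; ring_nf
  have hdeg : p.degree < #(range n) := by
    rw [Chebyshev.degree_U_natCast, card_range]; exact_mod_cast (by omega : j - 1 < n)
  have hinterp := congrArg (eval (cos φ)) (Lagrange.eq_interpolate hinj hdeg)
  rw [Lagrange.interpolate_apply, eval_finsetSum] at hinterp
  rw [← hp φ, hinterp, sum_mul]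
  refine sum_congr rfl fun k hk => ?_
  rw [eval_mul, eval_C, ← hp (θ k)]
  field_simp [hsin k (mem_range.mp hk)]

lemma exists_chebyshev_quadrature {n : ℕ} (hn : n ≠ 0) {φ : ℝ} (hφ0 : 0 < φ)
    (hφ : φ < π / (2 * n)) :
    ∃ μ : ℕ → ℝ, (∀ k < n, 0 < (-1) ^ k * μ k) ∧
      ∀ b, sinSum n b φ = ∑ k ∈ range n, μ k * sinSum n b (chebyshevAngle n k) := by
  have hφθ : ∀ k, φ < chebyshevAngle n k := fun k =>
    hφ.trans_le <| by simpa [chebyshevAngle] using (strictMono_chebyshevAngle hn).monotone k.zero_le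
  have hsin : ∀ k < n, 0 < sin (chebyshevAngle n k) := fun k hk =>
    sin_pos_of_pos_of_lt_pi (chebyshevAngle_pos hn) (chebyshevAngle_lt_pi hk)
  have hanti : StrictAntiOn (fun k => cos (chebyshevAngle n k)) (range n) :=
    strictAntiOn_cos.comp_strictMonoOn ((strictMono_chebyshevAngle hn).strictMonoOn _)
      fun k hk => ⟨(chebyshevAngle_pos hn).le, (chebyshevAngle_lt_pi (by simpa using hk)).le⟩
  have hcos : ∀ k < n, cos (chebyshevAngle n k) < cos φ := fun k hk =>
    cos_lt_cos_of_nonneg_of_le_pi hφ0.le (chebyshevAngle_lt_pi hk).le (hφθ k)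
  refine ⟨fun k => sin φ / sin (chebyshevAngle n k) *
    (Lagrange.basis (range n) (fun k => cos (chebyshevAngle n k)) k).eval (cos φ), ?_, ?_⟩
  · intro k hk
    have := neg_one_pow_mul_eval_basis_pos hanti hcos hk
    rw [mul_left_comm]
    exact mul_pos (div_pos (sin_pos_of_pos_of_lt_pi hφ0 ((hφθ k).trans
      (chebyshevAngle_lt_pi hk))) (hsin k hk)) this
  · intro b
    have hquad := fun j (hj : j ∈ Icc 1 n) => sin_nat_mul_eq_sum_eval_basis hanti.injOn
      (fun k hk => (hsin k hk).ne') hj φ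
    rw [sinSum, sum_congr rfl fun j hj => by rw [hquad j hj]]
    simp_rw [sinSum, mul_sum]
    rw [sum_comm]
    exact sum_congr rfl fun k _ => sum_congr rfl fun j _ => by ring

lemma isLocalExtr_of_forall_abs_le {f : ℝ → ℝ} {x₀ : ℝ} (hf : ∀ x, |f x| ≤ |f x₀|) :
    IsLocalExtr f x₀ := by
  rcases le_total 0 (f x₀) with h | h
  · exact .inr <| .of_forall fun x => by
      have := abs_le.mp ((hf x).trans_eq (abs_of_nonneg h)); linarith
  · exact .inl <| .of_forall fun x => by
      have := abs_le.mp ((hf x).trans_eq (abs_of_nonpos h)); linarith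

section Extremal

variable {n : ℕ}

lemma sinSum_le_sin_nat_mul (hn : n ≠ 0) {φ : ℝ} (hφ0 : 0 < φ) (hφ : φ < π / (2 * n))
    {b : ℕ → ℝ} (hb : ∀ k < n, |sinSum n b (chebyshevAngle n k)| ≤ 1) :
    sinSum n b φ ≤ sin (n * φ) ∧
      (sinSum n b φ = sin (n * φ) → ∀ k < n, sinSum n b (chebyshevAngle n k) = (-1) ^ k) := by
  obtain ⟨μ, hμ, hquad⟩ := exists_chebyshev_quadrature hn hφ0 hφ
  have hsin : sin (n * φ) = ∑ k ∈ range n, μ k * (-1) ^ k := by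
    rw [← sinSum_single hn, hquad]
    simp_rw [sinSum_single hn, sin_nat_mul_chebyshevAngle hn]
  have habs : ∀ k < n, |μ k| = μ k * (-1) ^ k := fun k hk => by
    rw [mul_comm, ← abs_of_pos (hμ k hk), abs_mul, abs_neg_one_pow, one_mul]
  have hle : ∀ k ∈ range n, μ k * sinSum n b (chebyshevAngle n k) ≤ μ k * (-1) ^ k :=
    fun k hk => calc
      _ ≤ |μ k| * |sinSum n b (chebyshevAngle n k)| := (le_abs_self _).trans (abs_mul _ _).le
      _ ≤ |μ k| := mul_le_of_le_one_right (abs_nonneg _) (hb k (mem_range.mp hk))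
      _ = μ k * (-1) ^ k := habs k (mem_range.mp hk)
  rw [hquad, hsin]
  refine ⟨sum_le_sum hle, fun heq k hk => ?_⟩
  exact mul_left_cancel₀ (right_ne_zero_of_mul (hμ k hk).ne')
    ((sum_eq_sum_iff_of_le hle).mp heq k (mem_range.mpr hk))

lemma sinSum_eq_sin_nat_mul (hn : n ≠ 0) {b : ℕ → ℝ}
    (h : ∀ k < n, sinSum n b (chebyshevAngle n k) = (-1) ^ k) :
    sinSum n b = fun θ => sin (n * θ) := by
  have hb := eq_of_sinSum_chebyshevAngle_eq (b' := Pi.single n 1) fun k hk => by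
    rw [h k hk, sinSum_single hn, sin_nat_mul_chebyshevAngle hn]
  funext θ
  rw [sinSum_congr hb, sinSum_single hn]

lemma trigPoly_eq_sin_nat_mul (hn : n ≠ 0) {a b : ℕ → ℝ} (hbound : ∀ θ, |trigPoly n a b θ| ≤ 1)
    (hnodes : ∀ k < n, sinSum n b (chebyshevAngle n k) = (-1) ^ k) (θ : ℝ) :
    trigPoly n a b θ = sin (n * θ) := by
  have hP : trigPoly n a b = fun θ => a 0 + cosSum n a θ + sin (n * θ) := by
    funext θ
    rw [trigPoly, sinSum_eq_sin_nat_mul hn hnodes]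
  -- `trigPoly n a b (±θ_k) = c ± (-1) ^ k` with both values in `[-1, 1]` forces `c = 0`.
  have hnode : ∀ k < n, a 0 + cosSum n a (chebyshevAngle n k) = 0 ∧
      trigPoly n a b (chebyshevAngle n k) = (-1) ^ k := fun k hk => by
    have h₁ := abs_le.mp (hbound (chebyshevAngle n k))
    have h₂ := abs_le.mp (hbound (-chebyshevAngle n k))
    simp only [hP, cosSum_neg, mul_neg, sin_neg, sin_nat_mul_chebyshevAngle hn] at h₁ h₂ ⊢
    rcases neg_one_pow_eq_or ℝ k with hk | hk <;> rw [hk] at h₁ h₂ ⊢ <;>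
      constructor <;> linarith [h₁.1, h₁.2, h₂.1, h₂.2]
  have hderiv : ∀ θ, HasDerivAt (trigPoly n a b)
      (-sinSum n (fun j => j * a j) θ + cos (n * θ) * n) θ := fun θ => by
    have hsin : HasDerivAt (fun θ => sin (n * θ)) (cos (n * θ) * n) θ := by
      simpa using ((hasDerivAt_id θ).const_mul (n : ℝ)).sin
    rw [hP]
    exact ((hasDerivAt_cosSum a θ).const_add _).add hsin
  have ha : ∀ j ∈ Icc 1 n, j * a j = 0 := eq_zero_of_sinSum_chebyshevAngle_eq_zero fun k hk => by
    have hextr : IsLocalExtr (trigPoly n a b) (chebyshevAngle n k) :=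
      isLocalExtr_of_forall_abs_le fun x => by
        rw [(hnode k hk).2, abs_neg_one_pow]; exact hbound x
    have := hextr.hasDerivAt_eq_zero (hderiv _)
    rwa [cos_nat_mul_chebyshevAngle hn, zero_mul, add_zero, neg_eq_zero] at this
  have hcos : cosSum n a = 0 := funext fun θ => sum_eq_zero fun j hj => by
    rw [(mul_eq_zero.mp (ha j hj)).resolve_left (Nat.cast_pos.mpr (mem_Icc.mp hj).1).ne', zero_mul]
  have ha0 : a 0 = 0 := by simpa [hcos] using (hnode 0 (Nat.pos_of_ne_zero hn)).1
  simp [hP, hcos, ha0]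

end Extremal

theorem dual_certificate_unique_max
    (fc : ℕ) (hfc : 1 ≤ fc) (h : ℝ) (hh0 : 0 < h) (hh1 : h < 1 / (2 * fc))
    (a b : ℕ → ℝ) (η : ℝ → ℝ)
    (hη : ∀ t, η t = a 0 + ∑ j ∈ Finset.Icc 1 fc,
      (a j * Real.cos (2 * π * j * t) + b j * Real.sin (2 * π * j * t)))
    (hbound : ∀ t, |η t| ≤ 1) :
    η (h / 2) - η (-(h / 2)) ≤ 2 * Real.sin (π * fc * h) ∧
    (η (h / 2) - η (-(h / 2)) = 2 * Real.sin (π * fc * h) →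
      ∀ t, η t = Real.sin (2 * π * fc * t)) := by
  have hn : fc ≠ 0 := by omega
  have hη' : ∀ t, η t = trigPoly fc a b (2 * π * t) := fun t => by
    rw [hη, trigPoly, cosSum, sinSum, add_assoc, ← sum_add_distrib]
    congr 1
    exact sum_congr rfl fun j _ => by ring_nf
  have hbound' : ∀ θ, |trigPoly fc a b θ| ≤ 1 := fun θ => by
    simpa [hη', mul_div_cancel₀ θ two_pi_pos.ne'] using hbound (θ / (2 * π))
  have hφ : π * h < π / (2 * fc) := by
    rw [← mul_one_div]; exact mul_lt_mul_of_pos_left hh1 pi_pos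
  have hdiff : η (h / 2) - η (-(h / 2)) = 2 * sinSum fc b (π * h) := by
    rw [hη', hη', ← trigPoly_sub_trigPoly_neg]; ring_nf
  have hsin : sin (fc * (π * h)) = sin (π * fc * h) := by ring_nf
  obtain ⟨hle, heq⟩ := sinSum_le_sin_nat_mul hn (by positivity) hφ fun k _ =>
    abs_sinSum_le_one hbound' _
  refine ⟨by linarith, fun hmax t => ?_⟩
  rw [hη', trigPoly_eq_sin_nat_mul hn hbound' (heq (by linarith))]
  ring_nf
end

section
/- For 0 < h < 1/(2 f_c) and each integer ℓ with -f_c ≤ ℓ ≤ f_c - 1, the quantity a_ℓ = (-1)^ℓ (cos(π h f_c)/(2 f_c)) · (cot(π(1/(4f_c) + ℓ/(2f_c) - h/2)) - cot(π(1/(4f_c) + ℓ/(2f_c) + h/2))) is nonzero and has sign (-1)^ℓ. -/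
/-!
On each interval `(kπ, (k+1)π)` the cotangent is strictly decreasing, because
`cot x - cot y = sin (y - x) / (sin x * sin y)` and `sin x`, `sin y` have the common sign
`(-1)^k`. Since `h < 1 / (2 f_c)`, both arguments `π (2ℓ + 1) / (4 f_c) ∓ π h / 2` lie in
`(ℓπ / (2 f_c), (ℓ+1)π / (2 f_c))`, which is contained in `(kπ, (k+1)π)` for
`k = ⌊ℓ / (2 f_c)⌋`.
So the cotangent difference is positive, as is `cos (π h f_c)`, and `(-1)^ℓ a_ℓ` is positive.
-/

open Real

lemma neg_one_zpow_mul_self {K : Type*} [DivisionRing K] (k : ℤ) :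
    (-1 : K) ^ k * (-1 : K) ^ k = 1 := by
  rw [← zpow_add₀ (neg_ne_zero.mpr one_ne_zero), ← two_mul]
  exact (even_two_mul k).neg_one_zpow

lemma Real.cot_sub_cot {x y : ℝ} (hx : sin x ≠ 0) (hy : sin y ≠ 0) :
    cot x - cot y = sin (y - x) / (sin x * sin y) := by
  rw [cot_eq_cos_div_sin, cot_eq_cos_div_sin, sin_sub]
  field_simp

lemma Real.sin_mul_sin_pos {k : ℤ} {x y : ℝ} (hx : x ∈ Set.Ioo (k * π) ((k + 1) * π))
    (hy : y ∈ Set.Ioo (k * π) ((k + 1) * π)) : 0 < sin x * sin y := by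
  have hx' : 0 < sin (x - k * π) :=
    sin_pos_of_pos_of_lt_pi (by linarith [hx.1]) (by linarith [hx.2])
  have hy' : 0 < sin (y - k * π) :=
    sin_pos_of_pos_of_lt_pi (by linarith [hy.1]) (by linarith [hy.2])
  calc 0 < sin (x - k * π) * sin (y - k * π) := mul_pos hx' hy'
    _ = ((-1) ^ k * (-1) ^ k) * (sin x * sin y) := by
      rw [sin_sub_int_mul_pi, sin_sub_int_mul_pi]; ring
    _ = sin x * sin y := by rw [neg_one_zpow_mul_self, one_mul]

lemma Real.cot_lt_cot_of_mem_Ioo {k : ℤ} {x y : ℝ} (hkx : k * π < x) (hxy : x < y)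
    (hyk : y < (k + 1) * π) : cot y < cot x := by
  have hsin := sin_mul_sin_pos (k := k) ⟨hkx, hxy.trans hyk⟩ ⟨hkx.trans hxy, hyk⟩
  rw [← sub_pos, cot_sub_cot (left_ne_zero_of_mul hsin.ne') (right_ne_zero_of_mul hsin.ne')]
  exact div_pos (sin_pos_of_pos_of_lt_pi (by linarith) (by linarith)) hsin

lemma Int.exists_le_div_and_succ_div_le {N : ℤ} (hN : 0 < N) (l : ℤ) :
    ∃ k : ℤ, (k : ℝ) ≤ l / N ∧ ((l : ℝ) + 1) / N ≤ k + 1 := by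
  refine ⟨l / N, ?_, ?_⟩
  · rw [le_div_iff₀ (by exact_mod_cast hN)]
    exact_mod_cast Int.ediv_mul_le l hN.ne'
  · rw [div_le_iff₀ (by exact_mod_cast hN)]
    have := Int.lt_ediv_add_one_mul_self l hN
    exact_mod_cast (by omega : l + 1 ≤ (l / N + 1) * N)

theorem amplitude_sign_general (fc : ℕ) (h : ℝ)
    (hh0 : 0 < h) (hh1 : h < 1 / (2 * fc))
    (l : ℤ) :
    (-1 : ℝ) ^ l * (Real.cos (π * h * fc) / (2 * fc)) *
      (Real.cot (π * (1 / (4 * fc) + (l : ℝ) / (2 * fc) - h / 2)) -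
       Real.cot (π * (1 / (4 * fc) + (l : ℝ) / (2 * fc) + h / 2))) ≠ 0 ∧
    0 < (-1 : ℝ) ^ l * ((-1 : ℝ) ^ l * (Real.cos (π * h * fc) / (2 * fc)) *
      (Real.cot (π * (1 / (4 * fc) + (l : ℝ) / (2 * fc) - h / 2)) -
       Real.cot (π * (1 / (4 * fc) + (l : ℝ) / (2 * fc) + h / 2)))) := by
  have hN : (0 : ℝ) < 2 * fc := one_div_pos.mp (hh0.trans hh1)
  obtain ⟨k, hk₁, hk₂⟩ :=
    Int.exists_le_div_and_succ_div_le (N := 2 * fc) (by exact_mod_cast hN) l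
  push_cast at hk₁ hk₂
  set s : ℝ := 1 / (4 * fc) + l / (2 * fc)
  have hquarter : 1 / (4 * fc : ℝ) = 1 / (2 * fc) / 2 := by field_simp; ring
  have hlo : (l : ℝ) / (2 * fc) < s - h / 2 := by simp only [s, hquarter]; linarith
  have hhi : s + h / 2 < ((l : ℝ) + 1) / (2 * fc) := by
    simp only [s, hquarter, add_div]; linarith
  have hcot : cot (π * (s + h / 2)) < cot (π * (s - h / 2)) :=
    cot_lt_cot_of_mem_Ioo (k := k) (by nlinarith [pi_pos]) (by nlinarith [pi_pos])
      (by nlinarith [pi_pos])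
  have hcos : 0 < cos (π * h * fc) := by
    have hhfc : h * (2 * fc) < 1 := (lt_div_iff₀ hN).mp hh1
    have hphf : 0 < π * h * fc := mul_pos (mul_pos pi_pos hh0) (by linarith)
    exact cos_pos_of_mem_Ioo ⟨by linarith [pi_pos], by nlinarith [pi_pos]⟩
  set C := cos (π * h * fc) / (2 * fc)
  set D := cot (π * (s - h / 2)) - cot (π * (s + h / 2))
  have hpos : 0 < C * D := mul_pos (div_pos hcos hN) (sub_pos.mpr hcot)
  have hsign : (-1 : ℝ) ^ l * ((-1) ^ l * C * D) = C * D := by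
    rw [← mul_assoc, ← mul_assoc, neg_one_zpow_mul_self, one_mul]
  rw [hsign]
  exact ⟨right_ne_zero_of_mul (hsign ▸ hpos.ne'), hpos⟩

theorem amplitude_sign (fc : ℕ) (hfc : 1 ≤ fc) (h : ℝ)
    (hh0 : 0 < h) (hh1 : h < 1 / (2 * fc))
    (l : ℤ) (hl1 : -(fc : ℤ) ≤ l) (hl2 : l ≤ (fc : ℤ) - 1) :
    (-1 : ℝ) ^ l * (Real.cos (π * h * fc) / (2 * fc)) *
      (Real.cot (π * (1 / (4 * fc) + (l : ℝ) / (2 * fc) - h / 2)) -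
       Real.cot (π * (1 / (4 * fc) + (l : ℝ) / (2 * fc) + h / 2))) ≠ 0 ∧
    0 < (-1 : ℝ) ^ l * ((-1 : ℝ) ^ l * (Real.cos (π * h * fc) / (2 * fc)) *
      (Real.cot (π * (1 / (4 * fc) + (l : ℝ) / (2 * fc) - h / 2)) -
       Real.cot (π * (1 / (4 * fc) + (l : ℝ) / (2 * fc) + h / 2)))) :=
  amplitude_sign_general fc h hh0 hh1 l
end
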